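/- Let G be a group and a, b ∈ G with b a b^{-1} = a^{-1} (as holds in the dihedral and generalised quaternion 2-groups). Then for every ℓ ≥ 2, all integers α_1,…,α_ℓ and all natural numbers β_1,…,β_ℓ, the left-normed commutator satisfies [a^{α_1} b^{β_1}, …, a^{α_ℓ} b^{β_ℓ}] = a^{2^{ℓ−1}·\bar{β}_ℓ ⋯ \bar{β}_3·(α_1 \bar{β}_2 − α_2 \bar{β}_1)}, where \bar{β}_i ∈ {0,1} satisfies \bar{β}_i ≡ β_i (mod 2) for each i. -/

import Mathlib

open scoped commutatorElement

/-- The left-normed commutator `[x₁, x₂, …, x_ℓ] = [[x₁, …, x_{ℓ-1}], x_ℓ]`,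
with the conventions that the empty list gives `1` and a singleton gives its
entry. -/
def leftNormedCommutator {G : Type*} [Group G] : List G → G
  | [] => 1
  | x :: xs => xs.foldl (fun acc y => ⁅acc, y⁆) x

/-! Since `b` inverts `a` by conjugation, `b ^ n * a ^ m = a ^ ((-1) ^ n * m) * b ^ n`.
Hence `x = a ^ α * b ^ n` and `y = a ^ γ * b ^ d` satisfy
`x * y = a ^ (α + (-1) ^ n * γ) * b ^ (n + d)` and symmetrically for `y * x`, so
`⁅x, y⁆ = (x * y) * (y * x)⁻¹ = a ^ ((1 - (-1) ^ d) * α - (1 - (-1) ^ n) * γ)`,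
and `1 - (-1) ^ n = 2 * (n % 2)`. In particular each commutator is a power of `a`, and
commuting a power `a ^ e` with `a ^ α * b ^ β` multiplies the exponent by `2 * (β % 2)`;
induction on `ℓ` finishes. -/

lemma Int.one_sub_neg_one_pow (n : ℕ) : 1 - (-1 : ℤ) ^ n = 2 * ((n % 2 : ℕ) : ℤ) := by
  rcases Nat.even_or_odd n with hn | hn
  · simp [hn.neg_one_pow, Nat.even_iff.mp hn]
  · simp [hn.neg_one_pow, Nat.odd_iff.mp hn]

lemma commutatorElement_eq_mul_mul_inv {G : Type*} [Group G] (x y : G) :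
    ⁅x, y⁆ = x * y * (y * x)⁻¹ := by
  rw [commutatorElement_def, mul_inv_rev, ← mul_assoc]

lemma leftNormedCommutator_append_singleton {G : Type*} [Group G] {l : List G} (hl : l ≠ [])
    (y : G) : leftNormedCommutator (l ++ [y]) = ⁅leftNormedCommutator l, y⁆ := by
  obtain ⟨x, xs, rfl⟩ := List.exists_cons_of_ne_nil hl
  simp [leftNormedCommutator, List.foldl_append]

section

variable {G : Type*} [Group G] {a b : G}

lemma pow_mul_zpow_of_conj_eq_inv (h : b * a * b⁻¹ = a⁻¹) (n : ℕ) (m : ℤ) :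
    b ^ n * a ^ m = a ^ ((-1) ^ n * m) * b ^ n := by
  have hb (m : ℤ) : b * a ^ m = a ^ (-m) * b := by
    rw [zpow_neg, ← inv_zpow]
    exact SemiconjBy.zpow_right (mul_inv_eq_iff_eq_mul.mp h) m
  induction n generalizing m with
  | zero => simp
  | succ n ih =>
    rw [pow_succ, mul_assoc, hb, ← mul_assoc, ih, mul_assoc, pow_succ,
      mul_assoc ((-1 : ℤ) ^ n), neg_one_mul]

lemma zpow_mul_pow_mul_zpow_mul_pow_of_conj_eq_inv (h : b * a * b⁻¹ = a⁻¹) (α γ : ℤ)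
    (n d : ℕ) : a ^ α * b ^ n * (a ^ γ * b ^ d) = a ^ (α + (-1) ^ n * γ) * b ^ (n + d) := by
  rw [mul_assoc, ← mul_assoc (b ^ n), pow_mul_zpow_of_conj_eq_inv h, mul_assoc, ← pow_add,
    ← mul_assoc, ← zpow_add]

lemma commutatorElement_zpow_mul_pow_of_conj_eq_inv (h : b * a * b⁻¹ = a⁻¹) (α γ : ℤ)
    (n d : ℕ) : ⁅a ^ α * b ^ n, a ^ γ * b ^ d⁆
      = a ^ (2 * (α * ((d % 2 : ℕ) : ℤ) - γ * ((n % 2 : ℕ) : ℤ))) := by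
  rw [commutatorElement_eq_mul_mul_inv, zpow_mul_pow_mul_zpow_mul_pow_of_conj_eq_inv h,
    zpow_mul_pow_mul_zpow_mul_pow_of_conj_eq_inv h, add_comm d, mul_inv_rev, mul_assoc,
    mul_inv_cancel_left, ← zpow_neg, ← zpow_add]
  congr 1
  linear_combination α * Int.one_sub_neg_one_pow d - γ * Int.one_sub_neg_one_pow n

lemma commutatorElement_zpow_zpow_mul_pow_of_conj_eq_inv (h : b * a * b⁻¹ = a⁻¹) (α γ : ℤ)
    (d : ℕ) : ⁅a ^ α, a ^ γ * b ^ d⁆ = a ^ (2 * ((d % 2 : ℕ) : ℤ) * α) := by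
  simpa [mul_comm, mul_left_comm] using commutatorElement_zpow_mul_pow_of_conj_eq_inv h α γ 0 d

end

/-- If `b a b⁻¹ = a⁻¹` (as in dihedral and generalised
quaternion 2-groups), then for `ℓ ≥ 2`,
`[a^α₁ b^β₁, …, a^α_ℓ b^β_ℓ] = a^(2^{ℓ−1}·β̄_ℓ⋯β̄₃·(α₁β̄₂ − α₂β̄₁))`,
where `β̄ᵢ ∈ {0,1}` and `β̄ᵢ ≡ βᵢ (mod 2)` (here `β̄ᵢ = βᵢ % 2`, and indices
are shifted to start at `0`). -/
theorem leftNormedCommutator_dihedral_quaternion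
    {G : Type*} [Group G] (a b : G) (h : b * a * b⁻¹ = a⁻¹)
    (ℓ : ℕ) (hℓ : 2 ≤ ℓ) (α : ℕ → ℤ) (β : ℕ → ℕ) :
    leftNormedCommutator ((List.range ℓ).map fun i => a ^ α i * b ^ β i)
      = a ^ ((2 : ℤ) ^ (ℓ - 1) * (∏ i ∈ Finset.Ico 2 ℓ, ((β i % 2 : ℕ) : ℤ)) *
          (α 0 * ((β 1 % 2 : ℕ) : ℤ) - α 1 * ((β 0 % 2 : ℕ) : ℤ))) := by
  induction ℓ, hℓ using Nat.le_induction with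
  | base =>
    simpa [leftNormedCommutator, List.range_succ] using
      commutatorElement_zpow_mul_pow_of_conj_eq_inv h (α 0) (α 1) (β 0) (β 1)
  | succ ℓ hℓ ih =>
    rw [List.range_succ, List.map_append, List.map_singleton,
      leftNormedCommutator_append_singleton (by simp; omega), ih,
      commutatorElement_zpow_zpow_mul_pow_of_conj_eq_inv h, Finset.prod_Ico_succ_top hℓ,
      Nat.sub_add_comm (by omega : 1 ≤ ℓ), pow_succ]
    congr 1
    ring
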